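/- For every n ≥ 1 and every x ≥ 0, the second moment of K_n^μ satisfies K_n^μ(ξ²; x) = x² + [e_μ(nx)(2Q'(1) + Q(1)) + 2μ Q(−1) e_μ(−nx)] x / (Q(1) n e_μ(nx)) + (Λ_μ Q)(1) e_μ(−nx) / (Q(1) n² e_μ(nx)) + [2Q''(1) − (Λ_μ Q)'(1) − (Λ_μ Q')(1) + Q'(1) − 2μ Q'(−1)] (e_μ(nx) − e_μ(−nx)) / (Q(1) n² e_μ(nx)) + [(Λ_μ² Q)(1) + 2μ (Λ_μ Q)(−1)] / (Q(1) n²), where K_n^μ(ξ²;x) denotes K_n^μ applied to ξ ↦ ξ² and Λ_μ² denotes the Dunkl operator applied twice. -/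

import Mathlib

open scoped BigOperators

/-- The Dunkl coefficients γ_μ(i). -/
noncomputable def gammaMu (μ : ℝ) (i : ℕ) : ℝ :=
  if Even i then
    2 ^ i * (Nat.factorial (i / 2)) *
      Real.Gamma (((i / 2 : ℕ) : ℝ) + μ + 1 / 2) / Real.Gamma (μ + 1 / 2)
  else
    2 ^ i * (Nat.factorial (i / 2)) *
      Real.Gamma (((i / 2 : ℕ) : ℝ) + μ + 3 / 2) / Real.Gamma (μ + 1 / 2)

/-- θ_i = 0 if i is even, 1 if i is odd. -/
noncomputable def thetaFn (i : ℕ) : ℝ := if Even i then 0 else 1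

/-- The Dunkl exponential e_μ(x) = Σ x^i / γ_μ(i). -/
noncomputable def dunklExp (μ : ℝ) (x : ℝ) : ℝ := ∑' i : ℕ, x ^ i / gammaMu μ i

/-- The Dunkl operator (Λ_μ f)(x) = f'(x) + μ (f(x) - f(-x)) / x. -/
noncomputable def dunklOp (μ : ℝ) (f : ℝ → ℝ) (x : ℝ) : ℝ :=
  deriv f x + μ * (f x - f (-x)) / x

/-- Q(t) = Σ c_i t^i / γ_μ(i). -/
noncomputable def Qf (μ : ℝ) (c : ℕ → ℝ) (t : ℝ) : ℝ := ∑' i : ℕ, c i * t ^ i / gammaMu μ i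

/-- The Dunkl–Appell polynomials q_i(x) = Σ_{j=0}^i (γ_μ(i)/(γ_μ(j)γ_μ(i-j))) c_{i-j} x^j. -/
noncomputable def qPoly (μ : ℝ) (c : ℕ → ℝ) (i : ℕ) (x : ℝ) : ℝ :=
  ∑ j ∈ Finset.range (i + 1),
    gammaMu μ i / (gammaMu μ j * gammaMu μ (i - j)) * c (i - j) * x ^ j

/-- The operators K_n^μ(f;x). -/
noncomputable def Kop (μ : ℝ) (c : ℕ → ℝ) (n : ℕ) (f : ℝ → ℝ) (x : ℝ) : ℝ :=
  1 / (Qf μ c 1 * dunklExp μ (n * x)) *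
    ∑' i : ℕ, qPoly μ c i (n * x) / gammaMu μ i * f (((i : ℝ) + 2 * μ * thetaFn i) / n)

/-!
With `y = n x` and `w_i = i + 2μθ_i`, the series defining `K_n^μ(ξ²; x)` is `n⁻²` times the
Cauchy product of `y^j / γ_μ(j)` and `c_k / γ_μ(k)` weighted by `w_{j+k}²`. Since
`w_{j+k} = w_j + w_k - 4μθ_jθ_k` and `θ² = θ`, this weight splits into six products of a
function of `j` and a function of `k`, so the series is a combination of six products of
weighted moments.
The moments of `y^j / γ_μ(j)` come from `γ_μ(j+1) = w_{j+1} γ_μ(j)` by an index shift and are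
expressed through `e_μ(±y)`; those of `c_k / γ_μ(k)` are values of `Q`, `Q'`, `Q''` at `±1`,
the factor `θ_k = (1 - (-1)^k)/2` separating the even and odd parts.
-/

open Finset

lemma HasSum.congr_fun_of_eq {f g : ℕ → ℝ} {s t : ℝ} (h : HasSum f s)
    (hfg : ∀ k, g k = f k) (hst : s = t) : HasSum g t :=
  hst ▸ h.congr_fun hfg

lemma hasSum_of_hasSum_succ {f : ℕ → ℝ} {s : ℝ} (h0 : f 0 = 0)
    (h : HasSum (fun k => f (k + 1)) s) : HasSum f s :=
  (hasSum_nat_add_iff' 1).mp (by simpa [h0] using h)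

lemma HasSum.sum_antidiagonal {F : ℕ × ℕ → ℝ} {s : ℝ} (h : HasSum F s) :
    HasSum (fun n => ∑ p ∈ antidiagonal n, F p) s :=
  (HasAntidiagonal.sigmaAntidiagonalEquivProd.hasSum_iff.mpr h).sigma
    fun n => (antidiagonal n).hasSum F

lemma thetaFn_eq (k : ℕ) : thetaFn k = (1 - (-1) ^ k) / 2 := by
  rcases Nat.even_or_odd k with hk | hk
  · simp [thetaFn, hk, hk.neg_one_pow]
  · simp [thetaFn, Nat.not_even_iff_odd.mpr hk, hk.neg_one_pow]

lemma thetaFn_mul_self (k : ℕ) : thetaFn k * thetaFn k = thetaFn k := by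
  have h : (-1 : ℝ) ^ k * (-1) ^ k = 1 := by rw [← mul_pow]; norm_num
  rw [thetaFn_eq]; linear_combination (1 / 4 : ℝ) * h

lemma abs_thetaFn_le (k : ℕ) : |thetaFn k| ≤ 1 := by
  unfold thetaFn; split <;> norm_num

lemma HasSum.thetaFn_mul {u : ℕ → ℝ} {s s' : ℝ} (hs : HasSum u s)
    (hs' : HasSum (fun k => (-1) ^ k * u k) s') :
    HasSum (fun k => thetaFn k * u k) ((s - s') / 2) := by
  refine ((hs.sub hs').div_const 2).congr_fun fun k => ?_
  rw [thetaFn_eq]; ring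

/-- `n` times the node at which `K_n^μ` samples `f`; also the ratio `γ_μ(k) / γ_μ(k - 1)`. -/
noncomputable def wMu (μ : ℝ) (k : ℕ) : ℝ := k + 2 * μ * thetaFn k

section Weight

variable {μ : ℝ}

lemma wMu_zero : wMu μ 0 = 0 := by simp [wMu, thetaFn]

lemma wMu_add (j k : ℕ) :
    wMu μ (j + k) = wMu μ j + wMu μ k - 4 * μ * (thetaFn j * thetaFn k) := by
  simp only [wMu, thetaFn_eq, pow_add]; push_cast; ring

lemma wMu_succ (k : ℕ) : wMu μ (k + 1) = wMu μ k + 1 + 2 * μ * (-1) ^ k := by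
  rw [wMu_add]; simp only [wMu, thetaFn_eq]; push_cast; ring

lemma natCast_le_wMu (hμ : 0 ≤ μ) (k : ℕ) : (k : ℝ) ≤ wMu μ k := by
  have : 0 ≤ thetaFn k := by unfold thetaFn; split <;> norm_num
  unfold wMu; nlinarith

lemma abs_wMu_le (k : ℕ) : |wMu μ k| ≤ (1 + 2 * |μ|) * 2 ^ k := by
  have hk : (k : ℝ) ≤ 2 ^ k := by exact_mod_cast Nat.lt_two_pow_self.le
  have h1 : (1 : ℝ) ≤ 2 ^ k := one_le_pow₀ (by norm_num)
  calc |wMu μ k| ≤ k + 2 * |μ| * |thetaFn k| := by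
        unfold wMu
        refine (abs_add_le _ _).trans ?_
        simp [abs_mul]
    _ ≤ k + 2 * |μ| * 1 := by gcongr; exact abs_thetaFn_le k
    _ ≤ (1 + 2 * |μ|) * 2 ^ k := by nlinarith [abs_nonneg μ]

end Weight

section Gamma

variable {μ : ℝ}

lemma gammaMu_two_mul (m : ℕ) :
    gammaMu μ (2 * m) =
      2 ^ (2 * m) * m.factorial * Real.Gamma (m + μ + 1 / 2) / Real.Gamma (μ + 1 / 2) := by
  simp [gammaMu]

lemma gammaMu_two_mul_add_one (m : ℕ) :
    gammaMu μ (2 * m + 1) =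
      2 ^ (2 * m + 1) * m.factorial * Real.Gamma (m + μ + 3 / 2) / Real.Gamma (μ + 1 / 2) := by
  have h : (2 * m + 1) / 2 = m := by omega
  simp [gammaMu, h]

variable (hμ : 0 ≤ μ)
include hμ

lemma gammaMu_pos (k : ℕ) : 0 < gammaMu μ k := by
  unfold gammaMu
  split <;> exact div_pos (mul_pos (by positivity) (Real.Gamma_pos_of_pos (by positivity)))
    (Real.Gamma_pos_of_pos (by positivity))

lemma gammaMu_zero : gammaMu μ 0 = 1 := by
  have hΓ : Real.Gamma (μ + 2⁻¹) ≠ 0 := (Real.Gamma_pos_of_pos (by linarith)).ne'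
  simp [gammaMu, hΓ]

lemma gammaMu_succ (k : ℕ) : gammaMu μ (k + 1) = wMu μ (k + 1) * gammaMu μ k := by
  have hΓ : Real.Gamma (μ + 1 / 2) ≠ 0 := (Real.Gamma_pos_of_pos (by linarith)).ne'
  obtain ⟨m, rfl | rfl⟩ := Nat.even_or_odd' k
  · have hθ : thetaFn (2 * m + 1) = 1 := by simp [thetaFn]
    have hG : Real.Gamma (m + μ + 3 / 2) = (m + μ + 1 / 2) * Real.Gamma (m + μ + 1 / 2) := by
      rw [← Real.Gamma_add_one (by positivity)]; ring_nf
    rw [gammaMu_two_mul_add_one, gammaMu_two_mul, wMu, hθ, hG]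
    push_cast; field_simp; ring
  · have hθ : thetaFn (2 * (m + 1)) = 0 := by simp [thetaFn]
    have hG : Real.Gamma ((m + 1 : ℕ) + μ + 1 / 2) = Real.Gamma (m + μ + 3 / 2) := by
      push_cast; ring_nf
    rw [show 2 * m + 1 + 1 = 2 * (m + 1) by ring, gammaMu_two_mul, gammaMu_two_mul_add_one, wMu,
      hθ, hG, Nat.factorial_succ]
    push_cast; field_simp; ring

lemma factorial_le_gammaMu (k : ℕ) : (k.factorial : ℝ) ≤ gammaMu μ k := by
  induction k with
  | zero => simp [gammaMu_zero hμ]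
  | succ k ih =>
    rw [gammaMu_succ hμ, Nat.factorial_succ]
    push_cast
    exact mul_le_mul (by simpa using natCast_le_wMu hμ (k + 1)) ih (by positivity)
      ((natCast_le_wMu hμ _).trans' (Nat.cast_nonneg _))

end Gamma

def HasInfiniteRadius (a : ℕ → ℝ) : Prop := ∀ R : ℝ, Summable fun k => ‖a k * R ^ k‖

noncomputable def powerSeriesSum (a : ℕ → ℝ) (t : ℝ) : ℝ := ∑' k, a k * t ^ k

def derivCoeff (a : ℕ → ℝ) (k : ℕ) : ℝ := (k + 1) * a (k + 1)

lemma succ_mul_pow_le {s R : ℝ} (hs : 0 ≤ s) (hsR : s ≤ R) (hR : 1 ≤ R) (k : ℕ) :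
    (k + 1) * s ^ k ≤ (2 * R) ^ (k + 1) := by
  have hk : ((k + 1 : ℕ) : ℝ) ≤ 2 ^ (k + 1) := by exact_mod_cast Nat.lt_two_pow_self.le
  push_cast at hk
  calc (k + 1) * s ^ k ≤ 2 ^ (k + 1) * R ^ (k + 1) := by
        gcongr
        exact (pow_le_pow_left₀ hs hsR k).trans (pow_le_pow_right₀ hR k.le_succ)
    _ = (2 * R) ^ (k + 1) := (mul_pow _ _ _).symm

section PowerSeries

variable {a : ℕ → ℝ} (ha : HasInfiniteRadius a)
include ha

lemma HasInfiniteRadius.summable_norm : Summable fun k => ‖a k‖ := by simpa using ha 1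

lemma HasInfiniteRadius.hasSum (t : ℝ) : HasSum (fun k => a k * t ^ k) (powerSeriesSum a t) :=
  (ha t).of_norm.hasSum

lemma HasInfiniteRadius.hasSum_mul_prod {b : ℕ → ℝ} (hb : HasInfiniteRadius b) :
    HasSum (fun p : ℕ × ℕ => a p.1 * b p.2) ((∑' k, a k) * ∑' k, b k) :=
  ha.summable_norm.of_norm.hasSum.mul hb.summable_norm.of_norm.hasSum
    (summable_mul_of_summable_norm ha.summable_norm hb.summable_norm)

lemma HasInfiniteRadius.weight_mul {v : ℕ → ℝ} {A B : ℝ} (hB : 0 ≤ B)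
    (hv : ∀ k, |v k| ≤ A * B ^ k) : HasInfiniteRadius fun k => v k * a k := fun R => by
  refine .of_nonneg_of_le (fun _ => norm_nonneg _) (fun k => ?_) ((ha (B * R)).mul_left A)
  calc ‖v k * a k * R ^ k‖ = |v k| * ‖a k * R ^ k‖ := by
        rw [mul_assoc, norm_mul, Real.norm_eq_abs]
    _ ≤ A * B ^ k * ‖a k * R ^ k‖ := by gcongr; exact hv k
    _ = A * ‖a k * (B * R) ^ k‖ := by
        simp only [mul_pow, norm_mul, norm_pow, Real.norm_of_nonneg hB]; ring

lemma HasInfiniteRadius.thetaFn_mul : HasInfiniteRadius fun k => thetaFn k * a k :=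
  ha.weight_mul zero_le_one (A := 1) fun k => by simpa using abs_thetaFn_le k

lemma HasInfiniteRadius.wMu_mul (μ : ℝ) : HasInfiniteRadius fun k => wMu μ k * a k :=
  ha.weight_mul zero_le_two abs_wMu_le

lemma HasInfiniteRadius.wMu_sq_mul (μ : ℝ) : HasInfiniteRadius fun k => wMu μ k ^ 2 * a k := by
  simpa only [← mul_assoc, ← sq] using (ha.wMu_mul μ).wMu_mul μ

lemma hasInfiniteRadius_derivCoeff : HasInfiniteRadius (derivCoeff a) := fun R => by
  have hR : 1 ≤ |R| + 1 := by linarith [abs_nonneg R]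
  refine .of_nonneg_of_le (fun _ => norm_nonneg _) (fun k => ?_)
    ((summable_nat_add_iff 1).mpr (ha (2 * (|R| + 1))))
  calc ‖derivCoeff a k * R ^ k‖ = |a (k + 1)| * ((k + 1) * |R| ^ k) := by
        simp only [derivCoeff, norm_mul, norm_pow, Real.norm_eq_abs]
        rw [abs_of_nonneg (by positivity : (0 : ℝ) ≤ k + 1)]; ring
    _ ≤ |a (k + 1)| * (2 * (|R| + 1)) ^ (k + 1) := by
        gcongr; exact succ_mul_pow_le (abs_nonneg R) (by linarith) hR k
    _ = ‖a (k + 1) * (2 * (|R| + 1)) ^ (k + 1)‖ := by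
        rw [norm_mul, norm_pow, Real.norm_eq_abs, Real.norm_of_nonneg (by positivity)]

lemma HasInfiniteRadius.hasDerivAt (t : ℝ) :
    HasDerivAt (powerSeriesSum a) (powerSeriesSum (derivCoeff a) t) t := by
  set R := |t| + 1
  have hR : 1 ≤ R := by linarith [abs_nonneg t]
  have ht : t ∈ Metric.ball (0 : ℝ) R := by simp [R]
  have hbound : ∀ (k : ℕ) (s : ℝ), s ∈ Metric.ball (0 : ℝ) R →
      ‖a k * (k * s ^ (k - 1))‖ ≤ ‖a k * (2 * R) ^ k‖ := by
    intro k s hs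
    rw [mem_ball_zero_iff, Real.norm_eq_abs] at hs
    rcases k with _ | k
    · simp
    calc ‖a (k + 1) * ((k + 1 : ℕ) * s ^ (k + 1 - 1))‖
          = |a (k + 1)| * ((k + 1) * |s| ^ k) := by
          simp only [norm_mul, norm_pow, Real.norm_eq_abs, Nat.add_sub_cancel]
          push_cast
          rw [abs_of_nonneg (by positivity : (0 : ℝ) ≤ k + 1)]
      _ ≤ |a (k + 1)| * (2 * R) ^ (k + 1) := by
          gcongr; exact succ_mul_pow_le (abs_nonneg s) hs.le hR k
      _ = ‖a (k + 1) * (2 * R) ^ (k + 1)‖ := by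
          rw [norm_mul, norm_pow, Real.norm_eq_abs, Real.norm_of_nonneg (by positivity)]
  have hderiv := hasDerivAt_tsum_of_isPreconnected (ha (2 * R)) Metric.isOpen_ball
    (convex_ball (0 : ℝ) R).isPreconnected
    (fun k s _ => (hasDerivAt_pow k s).const_mul (a k)) hbound ht ((ha t).of_norm) ht
  have hval : powerSeriesSum (derivCoeff a) t = ∑' k, a k * (k * t ^ (k - 1)) := by
    rw [Summable.tsum_eq_zero_add (.of_norm_bounded (ha (2 * R)) fun k => hbound k t ht)]
    simp [powerSeriesSum, derivCoeff, mul_assoc, mul_left_comm]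
  rw [hval]
  exact hderiv

lemma HasInfiniteRadius.deriv_eq : deriv (powerSeriesSum a) = powerSeriesSum (derivCoeff a) :=
  funext fun t => (ha.hasDerivAt t).deriv

lemma HasInfiniteRadius.differentiable : Differentiable ℝ (powerSeriesSum a) :=
  fun t => (ha.hasDerivAt t).differentiableAt

lemma HasInfiniteRadius.differentiable_deriv : Differentiable ℝ (deriv (powerSeriesSum a)) := by
  rw [ha.deriv_eq]; exact (hasInfiniteRadius_derivCoeff ha).differentiable

lemma HasInfiniteRadius.hasSum_natCast_mul (t : ℝ) :
    HasSum (fun k => k * a k * t ^ k) (t * deriv (powerSeriesSum a) t) := by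
  rw [ha.deriv_eq]
  refine hasSum_of_hasSum_succ (by simp) ?_
  refine (((hasInfiniteRadius_derivCoeff ha).hasSum t).mul_left t).congr_fun fun k => ?_
  simp only [derivCoeff]; push_cast; ring

lemma HasInfiniteRadius.hasSum_natCast_mul_sub_one (t : ℝ) :
    HasSum (fun k => k * (k - 1) * a k * t ^ k) (t ^ 2 * deriv (deriv (powerSeriesSum a)) t) := by
  rw [ha.deriv_eq]
  refine hasSum_of_hasSum_succ (by simp) ?_
  refine (((hasInfiniteRadius_derivCoeff ha).hasSum_natCast_mul t).mul_left t).congr_fun_of_eq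
    (fun k => ?_) (by ring)
  simp only [derivCoeff]; push_cast; ring

variable (μ : ℝ)

local notation "P" => powerSeriesSum a

lemma HasInfiniteRadius.hasSum_thetaFn_mul :
    HasSum (fun k => thetaFn k * a k) ((P 1 - P (-1)) / 2) :=
  HasSum.thetaFn_mul (by simpa using ha.hasSum 1) (by simpa [mul_comm] using ha.hasSum (-1))

lemma HasInfiniteRadius.hasSum_thetaFn_mul_natCast_mul :
    HasSum (fun k => thetaFn k * (k * a k)) ((deriv P 1 + deriv P (-1)) / 2) :=
  (HasSum.thetaFn_mul (by simpa using ha.hasSum_natCast_mul 1)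
    (by simpa [mul_comm, mul_left_comm] using ha.hasSum_natCast_mul (-1))).congr_fun_of_eq
    (fun k => rfl) (by ring)

lemma HasInfiniteRadius.hasSum_wMu_mul :
    HasSum (fun k => wMu μ k * a k) (deriv P 1 + μ * (P 1 - P (-1))) := by
  refine ((by simpa using ha.hasSum_natCast_mul 1 : HasSum (fun k => k * a k) _).add
    (ha.hasSum_thetaFn_mul.mul_left (2 * μ))).congr_fun_of_eq (fun k => ?_) (by ring)
  simp only [wMu]; ring

lemma HasInfiniteRadius.hasSum_thetaFn_mul_wMu_mul :
    HasSum (fun k => thetaFn k * (wMu μ k * a k))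
      ((deriv P 1 + deriv P (-1)) / 2 + μ * (P 1 - P (-1))) := by
  refine (ha.hasSum_thetaFn_mul_natCast_mul.add (ha.hasSum_thetaFn_mul.mul_left (2 * μ))
    ).congr_fun_of_eq (fun k => ?_) (by ring)
  simp only [wMu]; linear_combination 2 * μ * a k * thetaFn_mul_self k

lemma HasInfiniteRadius.hasSum_wMu_sq_mul :
    HasSum (fun k => wMu μ k ^ 2 * a k)
      (deriv (deriv P) 1 + deriv P 1 + 2 * μ * (deriv P 1 + deriv P (-1))
        + 2 * μ ^ 2 * (P 1 - P (-1))) := by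
  have hkk : HasSum (fun k => k * (k - 1) * a k) (deriv (deriv P) 1) := by
    simpa using ha.hasSum_natCast_mul_sub_one 1
  have hk : HasSum (fun k => k * a k) (deriv P 1) := by simpa using ha.hasSum_natCast_mul 1
  refine (((hkk.add hk).add (ha.hasSum_thetaFn_mul_natCast_mul.mul_left (4 * μ))).add
    (ha.hasSum_thetaFn_mul.mul_left (4 * μ ^ 2))).congr_fun_of_eq (fun k => ?_) (by ring)
  simp only [wMu]; linear_combination 4 * μ ^ 2 * a k * thetaFn_mul_self k

end PowerSeries

lemma deriv_dunklOp (μ : ℝ) {f : ℝ → ℝ} {x : ℝ} (hf : Differentiable ℝ f)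
    (hf' : DifferentiableAt ℝ (deriv f) x) (hx : x ≠ 0) :
    deriv (dunklOp μ f) x =
      deriv (deriv f) x + μ * ((deriv f x + deriv f (-x)) * x - (f x - f (-x))) / x ^ 2 := by
  have hodd : HasDerivAt (fun t => f t - f (-t)) (deriv f x + deriv f (-x)) x :=
    ((hf x).hasDerivAt.sub ((hf (-x)).hasDerivAt.comp x (hasDerivAt_neg x))).congr_deriv
      (by ring)
  refine (hf'.hasDerivAt.add ((hodd.const_mul μ).div (hasDerivAt_id x) hx)).deriv.trans ?_
  simp only [id]; ring

section DunklExp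

variable {μ : ℝ} (hμ : 0 ≤ μ)
include hμ

lemma hasInfiniteRadius_pow_div_gammaMu (y : ℝ) :
    HasInfiniteRadius fun k => y ^ k / gammaMu μ k := fun R => by
  refine .of_nonneg_of_le (fun _ => norm_nonneg _) (fun k => ?_)
    (Real.summable_pow_div_factorial |y * R|)
  rw [norm_mul, norm_div, Real.norm_of_nonneg (gammaMu_pos hμ k).le, div_mul_eq_mul_div,
    ← norm_mul, ← mul_pow, norm_pow, Real.norm_eq_abs]
  exact div_le_div_of_nonneg_left (by positivity) (by positivity) (factorial_le_gammaMu hμ k)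

lemma hasSum_dunklExp (y : ℝ) : HasSum (fun k => y ^ k / gammaMu μ k) (dunklExp μ y) :=
  (hasInfiniteRadius_pow_div_gammaMu hμ y).summable_norm.of_norm.hasSum

lemma one_le_dunklExp {y : ℝ} (hy : 0 ≤ y) : 1 ≤ dunklExp μ y := by
  have h := (hasSum_dunklExp hμ y).summable.le_tsum 0
    fun k _ => div_nonneg (pow_nonneg hy k) (gammaMu_pos hμ k).le
  simp only [pow_zero, gammaMu_zero hμ, div_one] at h
  exact h

lemma wMu_mul_pow_div_gammaMu_succ (y : ℝ) (k : ℕ) :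
    wMu μ (k + 1) * (y ^ (k + 1) / gammaMu μ (k + 1)) = y * (y ^ k / gammaMu μ k) := by
  have hw : wMu μ (k + 1) ≠ 0 := by
    have := natCast_le_wMu hμ (k + 1); push_cast at this; linarith
  have := (gammaMu_pos hμ k).ne'
  rw [gammaMu_succ hμ]; field_simp; ring

lemma hasSum_neg_one_pow_mul_pow_div_gammaMu (y : ℝ) :
    HasSum (fun k => (-1) ^ k * (y ^ k / gammaMu μ k)) (dunklExp μ (-y)) :=
  (hasSum_dunklExp hμ (-y)).congr_fun fun k => by rw [neg_pow]; ring

lemma hasSum_wMu_mul_pow_div_gammaMu (y : ℝ) :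
    HasSum (fun k => wMu μ k * (y ^ k / gammaMu μ k)) (y * dunklExp μ y) :=
  hasSum_of_hasSum_succ (by simp [wMu_zero])
    (((hasSum_dunklExp hμ y).mul_left y).congr_fun (wMu_mul_pow_div_gammaMu_succ hμ y))

lemma hasSum_wMu_sq_mul_pow_div_gammaMu (y : ℝ) :
    HasSum (fun k => wMu μ k ^ 2 * (y ^ k / gammaMu μ k))
      (y ^ 2 * dunklExp μ y + y * dunklExp μ y + 2 * μ * y * dunklExp μ (-y)) := by
  refine hasSum_of_hasSum_succ (by simp [wMu_zero]) ?_
  refine ((((hasSum_wMu_mul_pow_div_gammaMu hμ y).add (hasSum_dunklExp hμ y)).add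
    ((hasSum_neg_one_pow_mul_pow_div_gammaMu hμ y).mul_left (2 * μ))).mul_left y).congr_fun_of_eq
    (fun k => ?_) (by ring)
  rw [sq, mul_assoc, wMu_mul_pow_div_gammaMu_succ hμ, wMu_succ]; ring

lemma hasSum_thetaFn_mul_pow_div_gammaMu (y : ℝ) :
    HasSum (fun k => thetaFn k * (y ^ k / gammaMu μ k)) ((dunklExp μ y - dunklExp μ (-y)) / 2) :=
  (hasSum_dunklExp hμ y).thetaFn_mul (hasSum_neg_one_pow_mul_pow_div_gammaMu hμ y)

lemma hasSum_thetaFn_mul_wMu_mul_pow_div_gammaMu (y : ℝ) :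
    HasSum (fun k => thetaFn k * (wMu μ k * (y ^ k / gammaMu μ k)))
      ((y * dunklExp μ y + y * dunklExp μ (-y)) / 2) := by
  refine ((hasSum_wMu_mul_pow_div_gammaMu hμ y).thetaFn_mul
    ((hasSum_wMu_mul_pow_div_gammaMu hμ (-y)).congr_fun fun k => ?_)).congr_fun_of_eq
    (fun k => rfl) (by ring)
  rw [neg_pow]; ring

end DunklExp

lemma hasSum_wMu_sq_mul_sum_antidiagonal (μ : ℝ) {a b : ℕ → ℝ} (ha : HasInfiniteRadius a)
    (hb : HasInfiniteRadius b) :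
    HasSum (fun n => wMu μ n ^ 2 * ∑ p ∈ antidiagonal n, a p.1 * b p.2)
      ((∑' k, wMu μ k ^ 2 * a k) * (∑' k, b k)
        + 2 * ((∑' k, wMu μ k * a k) * ∑' k, wMu μ k * b k)
        + (∑' k, a k) * (∑' k, wMu μ k ^ 2 * b k)
        - 8 * μ * ((∑' k, thetaFn k * (wMu μ k * a k)) * ∑' k, thetaFn k * b k)
        - 8 * μ * ((∑' k, thetaFn k * a k) * ∑' k, thetaFn k * (wMu μ k * b k))
        + 16 * μ ^ 2 * ((∑' k, thetaFn k * a k) * ∑' k, thetaFn k * b k)) := by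
  have h₁ := (ha.wMu_sq_mul μ).hasSum_mul_prod hb
  have h₂ := (ha.wMu_mul μ).hasSum_mul_prod (hb.wMu_mul μ)
  have h₃ := ha.hasSum_mul_prod (hb.wMu_sq_mul μ)
  have h₄ := (ha.wMu_mul μ).thetaFn_mul.hasSum_mul_prod hb.thetaFn_mul
  have h₅ := ha.thetaFn_mul.hasSum_mul_prod (hb.wMu_mul μ).thetaFn_mul
  have h₆ := ha.thetaFn_mul.hasSum_mul_prod hb.thetaFn_mul
  have hpairs := ((((h₁.add (h₂.mul_left 2)).add h₃).sub (h₄.mul_left (8 * μ))).sub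
    (h₅.mul_left (8 * μ))).add (h₆.mul_left (16 * μ ^ 2))
  refine hpairs.sum_antidiagonal.congr_fun fun n => ?_
  rw [mul_sum]
  refine sum_congr rfl fun p hp => ?_
  rw [← mem_antidiagonal.mp hp, wMu_add]
  linear_combination 16 * μ ^ 2 * a p.1 * b p.2 *
    (thetaFn p.2 ^ 2 * thetaFn_mul_self p.1 + thetaFn p.1 * thetaFn_mul_self p.2)

lemma qPoly_div_gammaMu {μ : ℝ} (hμ : 0 ≤ μ) (c : ℕ → ℝ) (y : ℝ) (i : ℕ) :
    qPoly μ c i y / gammaMu μ i =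
      ∑ p ∈ antidiagonal i, y ^ p.1 / gammaMu μ p.1 * (c p.2 / gammaMu μ p.2) := by
  rw [Nat.sum_antidiagonal_eq_sum_range_succ
    (fun j k => y ^ j / gammaMu μ j * (c k / gammaMu μ k)), qPoly, sum_div]
  refine sum_congr rfl fun j _ => ?_
  have := gammaMu_pos hμ i
  have := gammaMu_pos hμ j
  have := gammaMu_pos hμ (i - j)
  field_simp

lemma Kop_sq_eq (μ : ℝ) (c : ℕ → ℝ) (n : ℕ) (x : ℝ) :
    Kop μ c n (fun ξ => ξ ^ 2) x =
      (∑' i, wMu μ i ^ 2 * (qPoly μ c i (n * x) / gammaMu μ i)) /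
        (n ^ 2 * (Qf μ c 1 * dunklExp μ (n * x))) := by
  rw [Kop, ← tsum_div_const]
  simp only [div_pow, wMu]
  rw [← tsum_mul_left]
  exact tsum_congr fun i => by ring

theorem Kop_second_moment_general (μ : ℝ) (hμ : 0 ≤ μ) (c : ℕ → ℝ)
    (hQ : ∀ t : ℝ, Summable fun i : ℕ => |c i * t ^ i / gammaMu μ i|)
    (hQ1 : 0 < Qf μ c 1)
    (n : ℕ) (hn : 1 ≤ n) (x : ℝ) (hx : 0 ≤ x) :
    Kop μ c n (fun ξ => ξ ^ 2) x =
      x ^ 2 +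
        (dunklExp μ (n * x) * (2 * deriv (Qf μ c) 1 + Qf μ c 1) +
            2 * μ * Qf μ c (-1) * dunklExp μ (-(n * x))) * x /
          (Qf μ c 1 * n * dunklExp μ (n * x)) +
        dunklOp μ (Qf μ c) 1 * dunklExp μ (-(n * x)) /
          (Qf μ c 1 * n ^ 2 * dunklExp μ (n * x)) +
        (2 * deriv (deriv (Qf μ c)) 1 - deriv (dunklOp μ (Qf μ c)) 1 -
            dunklOp μ (deriv (Qf μ c)) 1 + deriv (Qf μ c) 1 - 2 * μ * deriv (Qf μ c) (-1)) *
          (dunklExp μ (n * x) - dunklExp μ (-(n * x))) /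
          (Qf μ c 1 * n ^ 2 * dunklExp μ (n * x)) +
        (dunklOp μ (dunklOp μ (Qf μ c)) 1 + 2 * μ * dunklOp μ (Qf μ c) (-1)) /
          (Qf μ c 1 * n ^ 2) := by
  have hn0 : (n : ℝ) ≠ 0 := by exact_mod_cast Nat.one_le_iff_ne_zero.mp hn
  have he : dunklExp μ (n * x) ≠ 0 :=
    (one_pos.trans_le (one_le_dunklExp hμ (by positivity))).ne'
  have hb : HasInfiniteRadius fun k => c k / gammaMu μ k := fun R => by
    simpa only [div_mul_eq_mul_div, Real.norm_eq_abs] using hQ R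
  have hQf : Qf μ c = powerSeriesSum fun k => c k / gammaMu μ k :=
    funext fun t => tsum_congr fun k => (div_mul_eq_mul_div _ _ _).symm
  have hmoment := (hasSum_wMu_sq_mul_sum_antidiagonal μ
    (hasInfiniteRadius_pow_div_gammaMu hμ (n * x)) hb).tsum_eq
  simp_rw [← qPoly_div_gammaMu hμ] at hmoment
  rw [Kop_sq_eq, hmoment, (hasSum_dunklExp hμ _).tsum_eq,
    (hasSum_wMu_mul_pow_div_gammaMu hμ _).tsum_eq,
    (hasSum_wMu_sq_mul_pow_div_gammaMu hμ _).tsum_eq,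
    (hasSum_thetaFn_mul_pow_div_gammaMu hμ _).tsum_eq,
    (hasSum_thetaFn_mul_wMu_mul_pow_div_gammaMu hμ _).tsum_eq,
    (by simpa using hb.hasSum 1 : HasSum (fun k => c k / gammaMu μ k) _).tsum_eq,
    (hb.hasSum_wMu_mul μ).tsum_eq, (hb.hasSum_wMu_sq_mul μ).tsum_eq,
    hb.hasSum_thetaFn_mul.tsum_eq, (hb.hasSum_thetaFn_mul_wMu_mul μ).tsum_eq,
    hQf, dunklOp.eq_1 μ (dunklOp μ _) 1,
    deriv_dunklOp μ hb.differentiable (hb.differentiable_deriv 1) one_ne_zero]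
  rw [hQf] at hQ1
  simp only [dunklOp]
  field_simp
  ring

/-- the second moment of K_n^μ. -/
theorem Kop_second_moment (μ : ℝ) (hμ : 0 ≤ μ) (c : ℕ → ℝ) (hc0 : c 0 ≠ 0)
    (hQ : ∀ t : ℝ, Summable fun i : ℕ => |c i * t ^ i / gammaMu μ i|)
    (hq : ∀ i : ℕ, ∀ x : ℝ, 0 ≤ x → 0 ≤ qPoly μ c i x)
    (hQ1 : 0 < Qf μ c 1)
    (n : ℕ) (hn : 1 ≤ n) (x : ℝ) (hx : 0 ≤ x) :
    Kop μ c n (fun ξ => ξ ^ 2) x =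
      x ^ 2 +
        (dunklExp μ (n * x) * (2 * deriv (Qf μ c) 1 + Qf μ c 1) +
            2 * μ * Qf μ c (-1) * dunklExp μ (-(n * x))) * x /
          (Qf μ c 1 * n * dunklExp μ (n * x)) +
        dunklOp μ (Qf μ c) 1 * dunklExp μ (-(n * x)) /
          (Qf μ c 1 * n ^ 2 * dunklExp μ (n * x)) +
        (2 * deriv (deriv (Qf μ c)) 1 - deriv (dunklOp μ (Qf μ c)) 1 -
            dunklOp μ (deriv (Qf μ c)) 1 + deriv (Qf μ c) 1 - 2 * μ * deriv (Qf μ c) (-1)) *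
          (dunklExp μ (n * x) - dunklExp μ (-(n * x))) /
          (Qf μ c 1 * n ^ 2 * dunklExp μ (n * x)) +
        (dunklOp μ (dunklOp μ (Qf μ c)) 1 + 2 * μ * dunklOp μ (Qf μ c) (-1)) /
          (Qf μ c 1 * n ^ 2) :=
  Kop_second_moment_general μ hμ c hQ hQ1 n hn x hx
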